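/- Let α ∈ {+1, −1}, let A and B = A + α Z Zᵀ be n×n real symmetric positive definite matrices, where Z is n×k. Let V = A⁻¹ Z (I_k + α Zᵀ A⁻¹ Z)^{−1/2} (the matrix I_k + α Zᵀ A⁻¹ Z being positive definite under these hypotheses). Let C̃ be an n×n symmetric positive semidefinite matrix such that A^{−1/2} − α C̃ is positive definite, and define the residual R(C̃) = V Vᵀ − A^{−1/2} C̃ − C̃ A^{−1/2} + α C̃². Then ‖(A + α Z Zᵀ)^{−1/2} − (A^{−1/2} − α C̃)‖_F ≤ (n^{1/2} ‖R(C̃)‖_F)^{1/2} and ‖(A + α Z Zᵀ)^{−1/2} − (A^{−1/2} − α C̃)‖₂ ≤ min( ‖R(C̃)‖_F / √(λ_min((A + α Z Zᵀ)⁻¹)), (n^{1/2} ‖R(C̃)‖_F)^{1/2} ). -/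

import Mathlib

open Matrix

/-- Former Mathlib lemma `Matrix.isHermitian_transpose_mul_self` (removed upstream). -/
theorem Matrix.isHermitian_transpose_mul_self {α : Type*} {m n : Type*} [CommSemiring α]
    [StarRing α] [TrivialStar α] [Fintype m] (A : Matrix m n α) : (Aᵀ * A).IsHermitian := by
  simpa [Matrix.conjTranspose_eq_transpose_of_trivial] using
    Matrix.isHermitian_conjTranspose_mul_self A

/-- Former Mathlib definition `Matrix.PosSemidef.sqrt` (removed upstream), with its old value. -/
noncomputable def Matrix.PosSemidef.sqrt {n : Type*} [Fintype n]
    [DecidableEq n] {A : Matrix n n ℝ} (hA : A.PosSemidef) : Matrix n n ℝ :=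
  hA.1.eigenvectorUnitary.1 * diagonal ((↑) ∘ (√·) ∘ hA.1.eigenvalues) *
    (star hA.1.eigenvectorUnitary : Matrix n n ℝ)

/-- The Frobenius norm of a real matrix. -/
noncomputable def frobNorm {n m : ℕ} (M : Matrix (Fin n) (Fin m) ℝ) : ℝ :=
  Real.sqrt (∑ i, ∑ j, (M i j) ^ 2)

/-- The spectral norm (largest singular value) of a real square matrix. -/
noncomputable def specNorm {n : ℕ} (M : Matrix (Fin n) (Fin n) ℝ) : ℝ :=
  ⨆ i, Real.sqrt ((Matrix.isHermitian_transpose_mul_self M).eigenvalues i)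

/-- The smallest eigenvalue of a real symmetric matrix. -/
noncomputable def lambdaMin {n : ℕ} {M : Matrix (Fin n) (Fin n) ℝ}
    (hM : M.IsHermitian) : ℝ :=
  ⨅ i, hM.eigenvalues i

/-!
Write `S = (A + α Z Zᵀ)^{-1/2}` and `X = A^{-1/2} - α C̃`, both positive semidefinite. The Woodbury
identity gives `(A + α Z Zᵀ)⁻¹ = A⁻¹ - α V Vᵀ`, hence `S² - X² = -α R(C̃)`, and everything reduces to
comparing `S - X` with `S² - X²` on eigenvectors of the symmetric matrix `S - X`: if
`(S - X) v = μ v`, then `vᵀ (S² - X²) v = μ vᵀ (S + X) v` and `|μ| ‖v‖² ≤ vᵀ (S + X) v`.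
On an orthonormal eigenbasis this gives `μᵢ² ≤ |uᵢᵀ (S² - X²) uᵢ|`, and summing with Cauchy–Schwarz
gives `‖S - X‖_F² ≤ √n ‖S² - X²‖_F`. For the spectral norm, `vᵀ (S + X) v ≥ vᵀ S v ≥ λ_min(S²)^{1/2} ‖v‖²`
bounds every eigenvalue of `S - X` by `‖S² - X²‖_F / λ_min(S²)^{1/2}`; the singular values of the
symmetric matrix `S - X` are the absolute values of its eigenvalues, and they are also bounded by
`‖S - X‖_F`.
-/

lemma mul_self_sub_smul_sub_mul_self_eq {R A : Type*} [CommRing R] [Ring A] [Algebra R A]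
    (α : R) (T Q C : A) :
    (T * T - α • Q) - (T - α • C) * (T - α • C) = (-α) • (Q - T * C - C * T + α • C ^ 2) := by
  simp only [sub_mul, mul_sub, smul_mul_assoc, mul_smul_comm, smul_smul, sq, smul_sub, smul_add,
    neg_smul, neg_mul]
  abel

namespace Matrix

section DotProductSelf

variable {n R : Type*} [Fintype n] [Ring R] [LinearOrder R] [IsStrictOrderedRing R]

lemma dotProduct_self_nonneg (v : n → R) : 0 ≤ v ⬝ᵥ v :=
  Fintype.sum_nonneg fun i => mul_self_nonneg (v i)

lemma dotProduct_self_pos {v : n → R} (hv : v ≠ 0) : 0 < v ⬝ᵥ v :=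
  (dotProduct_self_nonneg v).lt_of_ne' (dotProduct_self_eq_zero.not.2 hv)

end DotProductSelf

lemma exists_mulVec_eq_smul_of_mulVec_mulVec_eq {n R : Type*} [Fintype n] [CommRing R]
    {E : Matrix n n R} {w : n → R} (hw : w ≠ 0) {s : R} (h : E *ᵥ (E *ᵥ w) = (s * s) • w) :
    ∃ v ≠ 0, ∃ μ, (μ = s ∨ μ = -s) ∧ E *ᵥ v = μ • v := by
  by_cases hu : E *ᵥ w + s • w = 0
  · exact ⟨w, hw, -s, Or.inr rfl, by rw [neg_smul]; exact eq_neg_of_add_eq_zero_left hu⟩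
  · refine ⟨E *ᵥ w + s • w, hu, s, Or.inl rfl, ?_⟩
    rw [mulVec_add, mulVec_smul, h, smul_add, smul_smul, add_comm]

lemma sum_sq_eq_trace_transpose_mul {m n R : Type*} [Fintype m] [Fintype n] [CommSemiring R]
    (M : Matrix m n R) :
    ∑ i, ∑ j, M i j ^ 2 = trace (Mᵀ * M) := by
  rw [Finset.sum_comm]
  simp [trace, mul_apply, sq]

variable {n : Type*} [Fintype n]

lemma PosSemidef.dotProduct_mulVec_nonneg' {S : Matrix n n ℝ} (hS : S.PosSemidef) (v : n → ℝ) :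
    0 ≤ v ⬝ᵥ S *ᵥ v := by
  simpa using hS.dotProduct_mulVec_nonneg v

lemma dotProduct_mulVec_mul_self_sub_mul_self {S X : Matrix n n ℝ} (hE : (S - X).IsHermitian)
    {v : n → ℝ} {μ : ℝ} (hv : (S - X) *ᵥ v = μ • v) :
    v ⬝ᵥ (S * S - X * X) *ᵥ v = μ * (v ⬝ᵥ S *ᵥ v + v ⬝ᵥ X *ᵥ v) := by
  have hvE : v ᵥ* (S - X) = μ • v := by
    rw [← mulVec_transpose, ← conjTranspose_eq_transpose_of_trivial, hE.eq, hv]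
  rw [show S * S - X * X = (S - X) * S + X * (S - X) by noncomm_ring, add_mulVec,
    ← mulVec_mulVec, ← mulVec_mulVec, dotProduct_add, dotProduct_mulVec v (S - X), hvE, hv,
    mulVec_smul, smul_dotProduct, dotProduct_smul, smul_eq_mul, smul_eq_mul, mul_add]

lemma abs_dotProduct_mulVec_mul_self_sub_mul_self {S X : Matrix n n ℝ} (hS : S.PosSemidef)
    (hX : X.PosSemidef) {v : n → ℝ} {μ : ℝ} (hv : (S - X) *ᵥ v = μ • v) :
    |v ⬝ᵥ (S * S - X * X) *ᵥ v| = |μ| * (v ⬝ᵥ S *ᵥ v + v ⬝ᵥ X *ᵥ v) := by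
  rw [dotProduct_mulVec_mul_self_sub_mul_self (hS.1.sub hX.1) hv, abs_mul,
    abs_of_nonneg (add_nonneg (hS.dotProduct_mulVec_nonneg' v) (hX.dotProduct_mulVec_nonneg' v))]

lemma abs_mul_dotProduct_self_le {S X : Matrix n n ℝ} (hS : S.PosSemidef)
    (hX : X.PosSemidef) {v : n → ℝ} {μ : ℝ} (hv : (S - X) *ᵥ v = μ • v) :
    |μ| * (v ⬝ᵥ v) ≤ v ⬝ᵥ S *ᵥ v + v ⬝ᵥ X *ᵥ v := by
  have hμ : μ * (v ⬝ᵥ v) = v ⬝ᵥ S *ᵥ v - v ⬝ᵥ X *ᵥ v := by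
    rw [← smul_eq_mul, ← dotProduct_smul, ← hv, sub_mulVec, dotProduct_sub]
  have hS' := hS.dotProduct_mulVec_nonneg' v
  have hX' := hX.dotProduct_mulVec_nonneg' v
  rw [← abs_of_nonneg (dotProduct_self_nonneg v), ← abs_mul, hμ, abs_le]
  constructor <;> linarith

variable [DecidableEq n]

lemma PosSemidef.sqrt_eq {A : Matrix n n ℝ} (hA : A.PosSemidef) :
    hA.sqrt = Unitary.conjStarAlgAut ℝ _ hA.1.eigenvectorUnitary
      (diagonal fun i => √(hA.1.eigenvalues i)) := rfl

lemma PosSemidef.posSemidef_sqrt {A : Matrix n n ℝ} (hA : A.PosSemidef) : hA.sqrt.PosSemidef :=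
  (PosSemidef.diagonal fun _ => Real.sqrt_nonneg _).mul_mul_conjTranspose_same _

lemma PosSemidef.transpose_sqrt {A : Matrix n n ℝ} (hA : A.PosSemidef) :
    hA.sqrtᵀ = hA.sqrt := by
  simpa using hA.posSemidef_sqrt.1.eq

lemma PosSemidef.sqrt_mul_self {A : Matrix n n ℝ} (hA : A.PosSemidef) :
    hA.sqrt * hA.sqrt = A := by
  rw [hA.sqrt_eq, ← map_mul, diagonal_mul_diagonal]
  conv_rhs => rw [hA.1.spectral_theorem]
  congr 2
  ext i
  simp [Real.mul_self_sqrt (hA.eigenvalues_nonneg i)]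

lemma PosSemidef.inv_sqrt_mul_self {A : Matrix n n ℝ} (hA : A.PosSemidef) :
    hA.sqrt⁻¹ * hA.sqrt⁻¹ = A⁻¹ := by
  rw [← mul_inv_rev, hA.sqrt_mul_self]

lemma PosDef.posDef_sqrt {A : Matrix n n ℝ} (hA : A.PosDef) : hA.posSemidef.sqrt.PosDef := by
  rw [hA.posSemidef.posSemidef_sqrt.posDef_iff_det_ne_zero]
  intro h
  have := hA.posSemidef.sqrt_mul_self
  exact hA.det_pos.ne' (by rw [← this, det_mul, h, mul_zero])

lemma inv_add_smul_mul_transpose {k : Type*} [Fintype k] [DecidableEq k] {A : Matrix n n ℝ}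
    (hA : A.PosDef) (Z : Matrix n k ℝ) (α : ℝ) (h : (1 + α • (Zᵀ * A⁻¹ * Z)).PosDef) :
    (A + α • (Z * Zᵀ))⁻¹ = A⁻¹ -
      α • ((A⁻¹ * Z * h.posSemidef.sqrt⁻¹) * (A⁻¹ * Z * h.posSemidef.sqrt⁻¹)ᵀ) := by
  have hW : (1 : Matrix k k ℝ)⁻¹ + Zᵀ * A⁻¹ * (α • Z) = 1 + α • (Zᵀ * A⁻¹ * Z) := by
    simp
  have hAT : Aᵀ = A := by simpa using hA.1.eq
  have hWood := add_mul_mul_inv_eq_sub A (α • Z) 1 Zᵀ hA.isUnit isUnit_one (hW ▸ h.isUnit)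
  rw [hW, Matrix.mul_one, Matrix.smul_mul] at hWood
  rw [hWood, transpose_mul, transpose_mul, transpose_nonsing_inv, transpose_nonsing_inv,
    h.posSemidef.transpose_sqrt, hAT, ← h.posSemidef.inv_sqrt_mul_self]
  simp only [Matrix.mul_assoc, Matrix.mul_smul, Matrix.smul_mul]

lemma IsHermitian.eigenvectorUnitary_mul_transpose {M : Matrix n n ℝ} (hM : M.IsHermitian) :
    (hM.eigenvectorUnitary : Matrix n n ℝ) * (hM.eigenvectorUnitary : Matrix n n ℝ)ᵀ = 1 :=
  Unitary.coe_mul_star_self hM.eigenvectorUnitary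

lemma IsHermitian.transpose_eigenvectorUnitary_mul_mul {M : Matrix n n ℝ} (hM : M.IsHermitian) :
    (hM.eigenvectorUnitary : Matrix n n ℝ)ᵀ * M * hM.eigenvectorUnitary =
      diagonal hM.eigenvalues := by
  simpa [star_eq_conjTranspose] using hM.conjStarAlgAut_star_eigenvectorUnitary

lemma IsHermitian.eigenvectorBasis_ne_zero {M : Matrix n n ℝ} (hM : M.IsHermitian) (i : n) :
    ⇑(hM.eigenvectorBasis i) ≠ 0 :=
  (WithLp.ofLp_eq_zero 2).ne.2 <| hM.eigenvectorBasis.orthonormal.ne_zero i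

lemma IsHermitian.dotProduct_eigenvectorBasis_self {M : Matrix n n ℝ} (hM : M.IsHermitian)
    (i : n) : ⇑(hM.eigenvectorBasis i) ⬝ᵥ ⇑(hM.eigenvectorBasis i) = 1 := by
  have h := real_inner_self_eq_norm_sq (hM.eigenvectorBasis i)
  rw [hM.eigenvectorBasis.orthonormal.1 i, one_pow, EuclideanSpace.inner_eq_star_dotProduct] at h
  simpa using h

lemma IsHermitian.mul_dotProduct_self_le {M : Matrix n n ℝ} (hM : M.IsHermitian) {c : ℝ}
    (hc : ∀ i, c ≤ hM.eigenvalues i) (v : n → ℝ) : c * (v ⬝ᵥ v) ≤ v ⬝ᵥ M *ᵥ v := by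
  have hshift : M - c • 1 = Unitary.conjStarAlgAut ℝ _ hM.eigenvectorUnitary
      (diagonal fun i => hM.eigenvalues i - c) := by
    have hdiag : (diagonal fun i => hM.eigenvalues i - c) =
        diagonal (RCLike.ofReal ∘ hM.eigenvalues) - algebraMap ℝ (Matrix n n ℝ) c := by
      rw [algebraMap_eq_diagonal, ← diagonal_sub]
      rfl
    rw [hdiag, map_sub, AlgHomClass.commutes, ← hM.spectral_theorem,
      Algebra.algebraMap_eq_smul_one]
  have hpsd : (M - c • 1).PosSemidef := by
    rw [hshift]
    exact (PosSemidef.diagonal fun i => sub_nonneg.2 (hc i)).mul_mul_conjTranspose_same _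
  have := hpsd.dotProduct_mulVec_nonneg v
  simp only [star_trivial, sub_mulVec, smul_mulVec, one_mulVec, dotProduct_sub,
    dotProduct_smul, smul_eq_mul] at this
  linarith

end Matrix

section FinNorms

variable {n : ℕ}

lemma sq_frobNorm {m : ℕ} (M : Matrix (Fin n) (Fin m) ℝ) :
    frobNorm M ^ 2 = ∑ i, ∑ j, M i j ^ 2 :=
  Real.sq_sqrt (by positivity)

lemma frobNorm_smul {m : ℕ} (c : ℝ) (M : Matrix (Fin n) (Fin m) ℝ) :
    frobNorm (c • M) = |c| * frobNorm M := by
  simp only [frobNorm, Matrix.smul_apply, smul_eq_mul, mul_pow, ← Finset.mul_sum]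
  rw [Real.sqrt_mul (sq_nonneg c), Real.sqrt_sq_eq_abs]

lemma frobNorm_transpose_mul_mul {U : Matrix (Fin n) (Fin n) ℝ} (hU : U * Uᵀ = 1)
    (M : Matrix (Fin n) (Fin n) ℝ) : frobNorm (Uᵀ * M * U) = frobNorm M := by
  unfold frobNorm
  rw [sum_sq_eq_trace_transpose_mul, sum_sq_eq_trace_transpose_mul]
  congr 1
  calc trace ((Uᵀ * M * U)ᵀ * (Uᵀ * M * U)) = trace (Uᵀ * (Mᵀ * (U * Uᵀ) * M * U)) := by
        simp only [transpose_mul, transpose_transpose, Matrix.mul_assoc]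
    _ = trace (Mᵀ * M) := by
        rw [hU, Matrix.mul_one, trace_mul_comm, Matrix.mul_assoc, hU, Matrix.mul_one]

lemma abs_dotProduct_mulVec_le_frobNorm (M : Matrix (Fin n) (Fin n) ℝ) (v : Fin n → ℝ) :
    |v ⬝ᵥ M *ᵥ v| ≤ frobNorm M * (v ⬝ᵥ v) := by
  have hCS := Finset.sum_mul_sq_le_sq_mul_sq Finset.univ (fun p : Fin n × Fin n => M p.1 p.2)
    (fun p => v p.1 * v p.2)
  have hquad : ∑ i, ∑ j, M i j * (v i * v j) = v ⬝ᵥ M *ᵥ v := by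
    simp only [dotProduct, mulVec, Finset.mul_sum]
    exact Finset.sum_congr rfl fun i _ => Finset.sum_congr rfl fun j _ => by ring
  have hvv : ∑ i, ∑ j, (v i * v j) ^ 2 = (v ⬝ᵥ v) ^ 2 := by
    simp only [dotProduct, sq, Finset.sum_mul_sum]
    exact Finset.sum_congr rfl fun i _ => Finset.sum_congr rfl fun j _ => by ring
  simp only [Fintype.sum_prod_type, hquad, hvv, ← sq_frobNorm, ← mul_pow] at hCS
  exact abs_le_of_sq_le_sq hCS (mul_nonneg (Real.sqrt_nonneg _) (dotProduct_self_nonneg v))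

lemma sum_abs_diag_le_sqrt_mul_frobNorm (N : Matrix (Fin n) (Fin n) ℝ) :
    ∑ i, |N i i| ≤ √n * frobNorm N := by
  calc ∑ i, |N i i| = ∑ i, 1 * |N i i| := by simp
    _ ≤ √(∑ _i : Fin n, 1 ^ 2) * √(∑ i, |N i i| ^ 2) := Real.sum_mul_le_sqrt_mul_sqrt _ _ _
    _ ≤ √n * frobNorm N := by
        simp only [one_pow, Finset.sum_const, Finset.card_univ, Fintype.card_fin, nsmul_eq_mul,
          mul_one, sq_abs]
        rw [frobNorm]
        gcongr with i
        exact Finset.single_le_sum (fun j _ => sq_nonneg (N i j)) (Finset.mem_univ i)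

/-- A Powers–Størmer inequality: `‖S - X‖_F² ≤ ‖S² - X²‖_tr ≤ √n ‖S² - X²‖_F`. -/
lemma sq_frobNorm_sub_le {S X : Matrix (Fin n) (Fin n) ℝ} (hS : S.PosSemidef)
    (hX : X.PosSemidef) : frobNorm (S - X) ^ 2 ≤ √n * frobNorm (S * S - X * X) := by
  have hE : (S - X).IsHermitian := hS.1.sub hX.1
  set U : Matrix (Fin n) (Fin n) ℝ := ↑hE.eigenvectorUnitary
  have hU : U * Uᵀ = 1 := hE.eigenvectorUnitary_mul_transpose
  have hpoint : ∀ i, hE.eigenvalues i ^ 2 ≤ |(Uᵀ * (S * S - X * X) * U) i i| := by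
    intro i
    have hEu := hE.mulVec_eigenvectorBasis i
    have hUi : Uᵀ i = ⇑(hE.eigenvectorBasis i) := hE.eigenvectorUnitary_transpose_apply i
    rw [mul_mul_apply, hUi, abs_dotProduct_mulVec_mul_self_sub_mul_self hS hX hEu]
    calc hE.eigenvalues i ^ 2
        = |hE.eigenvalues i| * (|hE.eigenvalues i| *
            (⇑(hE.eigenvectorBasis i) ⬝ᵥ ⇑(hE.eigenvectorBasis i))) := by
          rw [hE.dotProduct_eigenvectorBasis_self, mul_one, ← sq, sq_abs]
      _ ≤ _ := by gcongr; exact abs_mul_dotProduct_self_le hS hX hEu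
  calc frobNorm (S - X) ^ 2 = ∑ i, hE.eigenvalues i ^ 2 := by
        rw [← frobNorm_transpose_mul_mul hU, hE.transpose_eigenvectorUnitary_mul_mul, sq_frobNorm]
        simp [diagonal_apply]
    _ ≤ ∑ i, |(Uᵀ * (S * S - X * X) * U) i i| := Finset.sum_le_sum fun i _ => hpoint i
    _ ≤ √n * frobNorm (S * S - X * X) := by
        rw [← frobNorm_transpose_mul_mul hU (S * S - X * X)]
        exact sum_abs_diag_le_sqrt_mul_frobNorm _

lemma specNorm_le_frobNorm (M : Matrix (Fin n) (Fin n) ℝ) : specNorm M ≤ frobNorm M := by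
  refine Real.iSup_le (fun i => Real.sqrt_le_sqrt ?_) (Real.sqrt_nonneg _)
  have hH := isHermitian_transpose_mul_self M
  have hpsd : (Mᵀ * M).PosSemidef := by simpa using posSemidef_conjTranspose_mul_self M
  calc hH.eigenvalues i ≤ ∑ j, hH.eigenvalues j :=
        Finset.single_le_sum (fun j _ => hpsd.eigenvalues_nonneg j) (Finset.mem_univ i)
    _ = trace (Mᵀ * M) := by simpa using hH.trace_eq_sum_eigenvalues.symm
    _ = ∑ i, ∑ j, M i j ^ 2 := (sum_sq_eq_trace_transpose_mul M).symm

lemma lambdaMin_le_eigenvalues {M : Matrix (Fin n) (Fin n) ℝ} (hM : M.IsHermitian)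
    (i : Fin n) : lambdaMin hM ≤ hM.eigenvalues i :=
  ciInf_le (Set.finite_range _).bddBelow i

lemma lambdaMin_pos [Nonempty (Fin n)] {M : Matrix (Fin n) (Fin n) ℝ} (hM : M.PosDef) :
    0 < lambdaMin hM.1 := by
  obtain ⟨i, hi⟩ := exists_eq_ciInf_of_finite (f := hM.1.eigenvalues)
  rw [lambdaMin, ← hi]
  exact hM.eigenvalues_pos i

lemma lambdaMin_le_of_mulVec_eq {M : Matrix (Fin n) (Fin n) ℝ} (hM : M.IsHermitian)
    {v : Fin n → ℝ} (hv : v ≠ 0) {μ : ℝ} (h : M *ᵥ v = μ • v) : lambdaMin hM ≤ μ := by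
  have := hM.mul_dotProduct_self_le (lambdaMin_le_eigenvalues hM) v
  rw [h, dotProduct_smul, smul_eq_mul] at this
  exact le_of_mul_le_mul_right this (dotProduct_self_pos hv)

lemma sqrt_lambdaMin_mul_dotProduct_self_le {S M : Matrix (Fin n) (Fin n) ℝ}
    (hS : S.PosSemidef) (hM : M.IsHermitian) (hSM : S * S = M) (v : Fin n → ℝ) :
    √(lambdaMin hM) * (v ⬝ᵥ v) ≤ v ⬝ᵥ S *ᵥ v := by
  refine hS.1.mul_dotProduct_self_le (fun i => ?_) v
  have hMu : M *ᵥ ⇑(hS.1.eigenvectorBasis i) =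
      (hS.1.eigenvalues i * hS.1.eigenvalues i) • ⇑(hS.1.eigenvectorBasis i) := by
    rw [← hSM, ← mulVec_mulVec, hS.1.mulVec_eigenvectorBasis, mulVec_smul,
      hS.1.mulVec_eigenvectorBasis, smul_smul]
  calc √(lambdaMin hM) ≤ √(hS.1.eigenvalues i * hS.1.eigenvalues i) :=
        Real.sqrt_le_sqrt (lambdaMin_le_of_mulVec_eq hM (hS.1.eigenvectorBasis_ne_zero i) hMu)
    _ = hS.1.eigenvalues i := Real.sqrt_mul_self (hS.eigenvalues_nonneg i)

lemma specNorm_sub_le {S X M : Matrix (Fin n) (Fin n) ℝ} (hS : S.PosSemidef)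
    (hX : X.PosSemidef) (hM : M.PosDef) (hSM : S * S = M) :
    specNorm (S - X) ≤ frobNorm (S * S - X * X) / √(lambdaMin hM.1) := by
  refine Real.iSup_le (fun i => ?_) (div_nonneg (Real.sqrt_nonneg _) (Real.sqrt_nonneg _))
  have : Nonempty (Fin n) := ⟨i⟩
  have hc : 0 < √(lambdaMin hM.1) := Real.sqrt_pos.2 (lambdaMin_pos hM)
  have hH := isHermitian_transpose_mul_self (S - X)
  have hEE : (S - X) * (S - X) = (S - X)ᵀ * (S - X) := by
    rw [← conjTranspose_eq_transpose_of_trivial, (hS.1.sub hX.1).eq]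
  have ht : 0 ≤ hH.eigenvalues i := by
    simpa using (posSemidef_conjTranspose_mul_self (S - X)).eigenvalues_nonneg i
  obtain ⟨v, hv, μ, hμ, hEv⟩ := exists_mulVec_eq_smul_of_mulVec_mulVec_eq
    (hH.eigenvectorBasis_ne_zero i) (s := √(hH.eigenvalues i)) (by
      rw [mulVec_mulVec, hEE, hH.mulVec_eigenvectorBasis, Real.mul_self_sqrt ht])
  have hμ : |μ| = √(hH.eigenvalues i) := by
    rcases hμ with rfl | rfl <;> simp
  rw [le_div_iff₀ hc]
  refine le_of_mul_le_mul_right ?_ (dotProduct_self_pos hv)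
  calc √(hH.eigenvalues i) * √(lambdaMin hM.1) * (v ⬝ᵥ v)
      = |μ| * (√(lambdaMin hM.1) * (v ⬝ᵥ v)) := by rw [hμ, mul_assoc]
    _ ≤ |μ| * (v ⬝ᵥ S *ᵥ v + v ⬝ᵥ X *ᵥ v) := by
        gcongr
        linarith [sqrt_lambdaMin_mul_dotProduct_self_le hS hM.1 hSM v,
          hX.dotProduct_mulVec_nonneg' v]
    _ = |v ⬝ᵥ (S * S - X * X) *ᵥ v| :=
        (abs_dotProduct_mulVec_mul_self_sub_mul_self hS hX hEv).symm
    _ ≤ frobNorm (S * S - X * X) * (v ⬝ᵥ v) := abs_dotProduct_mulVec_le_frobNorm _ v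

end FinNorms

theorem inv_sqrt_update_error_bound_general {n k : ℕ} (α : ℝ) (hα : α = 1 ∨ α = -1)
    (A : Matrix (Fin n) (Fin n) ℝ) (Z : Matrix (Fin n) (Fin k) ℝ)
    (hA : A.PosDef) (hB : (A + α • (Z * Zᵀ)).PosDef)
    (h : ((1 : Matrix (Fin k) (Fin k) ℝ) + α • (Zᵀ * A⁻¹ * Z)).PosDef)
    (Ct : Matrix (Fin n) (Fin n) ℝ)
    (hpos : ((hA.posSemidef.sqrt)⁻¹ - α • Ct).PosDef) :
    frobNorm ((hB.posSemidef.sqrt)⁻¹ - ((hA.posSemidef.sqrt)⁻¹ - α • Ct)) ≤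
      Real.sqrt (Real.sqrt n *
        frobNorm ((A⁻¹ * Z * (h.posSemidef.sqrt)⁻¹) * (A⁻¹ * Z * (h.posSemidef.sqrt)⁻¹)ᵀ -
          (hA.posSemidef.sqrt)⁻¹ * Ct - Ct * (hA.posSemidef.sqrt)⁻¹ + α • Ct ^ 2)) ∧
    specNorm ((hB.posSemidef.sqrt)⁻¹ - ((hA.posSemidef.sqrt)⁻¹ - α • Ct)) ≤
      min (frobNorm ((A⁻¹ * Z * (h.posSemidef.sqrt)⁻¹) * (A⁻¹ * Z * (h.posSemidef.sqrt)⁻¹)ᵀ -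
            (hA.posSemidef.sqrt)⁻¹ * Ct - Ct * (hA.posSemidef.sqrt)⁻¹ + α • Ct ^ 2) /
          Real.sqrt (lambdaMin hB.inv.1))
        (Real.sqrt (Real.sqrt n *
          frobNorm ((A⁻¹ * Z * (h.posSemidef.sqrt)⁻¹) * (A⁻¹ * Z * (h.posSemidef.sqrt)⁻¹)ᵀ -
            (hA.posSemidef.sqrt)⁻¹ * Ct - Ct * (hA.posSemidef.sqrt)⁻¹ + α • Ct ^ 2))) := by
  set V := A⁻¹ * Z * (h.posSemidef.sqrt)⁻¹
  set Sa := (hA.posSemidef.sqrt)⁻¹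
  set Sb := (hB.posSemidef.sqrt)⁻¹
  have hSb : Sb.PosDef := hB.posDef_sqrt.inv
  have hSb_sq : Sb * Sb = (A + α • (Z * Zᵀ))⁻¹ := hB.posSemidef.inv_sqrt_mul_self
  have hwoodbury : Sb * Sb = Sa * Sa - α • (V * Vᵀ) := by
    rw [hSb_sq, inv_add_smul_mul_transpose hA Z α h, hA.posSemidef.inv_sqrt_mul_self]
  have hresidual : frobNorm (Sb * Sb - (Sa - α • Ct) * (Sa - α • Ct)) =
      frobNorm (V * Vᵀ - Sa * Ct - Ct * Sa + α • Ct ^ 2) := by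
    rw [hwoodbury, mul_self_sub_smul_sub_mul_self_eq, frobNorm_smul, abs_neg,
      show |α| = 1 by rcases hα with rfl | rfl <;> norm_num, one_mul]
  have hfrob := Real.le_sqrt_of_sq_le
    (hresidual ▸ sq_frobNorm_sub_le hSb.posSemidef hpos.posSemidef)
  refine ⟨hfrob, le_min ?_ ((specNorm_le_frobNorm _).trans hfrob)⟩
  rw [← hresidual]
  exact specNorm_sub_le hSb.posSemidef hpos.posSemidef hB.inv hSb_sq

theorem inv_sqrt_update_error_bound {n k : ℕ} (α : ℝ) (hα : α = 1 ∨ α = -1)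
    (A : Matrix (Fin n) (Fin n) ℝ) (Z : Matrix (Fin n) (Fin k) ℝ)
    (hA : A.PosDef) (hB : (A + α • (Z * Zᵀ)).PosDef)
    (h : ((1 : Matrix (Fin k) (Fin k) ℝ) + α • (Zᵀ * A⁻¹ * Z)).PosDef)
    (Ct : Matrix (Fin n) (Fin n) ℝ) (hC : Ct.PosSemidef)
    (hpos : ((hA.posSemidef.sqrt)⁻¹ - α • Ct).PosDef) :
    frobNorm ((hB.posSemidef.sqrt)⁻¹ - ((hA.posSemidef.sqrt)⁻¹ - α • Ct)) ≤
      Real.sqrt (Real.sqrt n *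
        frobNorm ((A⁻¹ * Z * (h.posSemidef.sqrt)⁻¹) * (A⁻¹ * Z * (h.posSemidef.sqrt)⁻¹)ᵀ -
          (hA.posSemidef.sqrt)⁻¹ * Ct - Ct * (hA.posSemidef.sqrt)⁻¹ + α • Ct ^ 2)) ∧
    specNorm ((hB.posSemidef.sqrt)⁻¹ - ((hA.posSemidef.sqrt)⁻¹ - α • Ct)) ≤
      min (frobNorm ((A⁻¹ * Z * (h.posSemidef.sqrt)⁻¹) * (A⁻¹ * Z * (h.posSemidef.sqrt)⁻¹)ᵀ -
            (hA.posSemidef.sqrt)⁻¹ * Ct - Ct * (hA.posSemidef.sqrt)⁻¹ + α • Ct ^ 2) /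
          Real.sqrt (lambdaMin hB.inv.1))
        (Real.sqrt (Real.sqrt n *
          frobNorm ((A⁻¹ * Z * (h.posSemidef.sqrt)⁻¹) * (A⁻¹ * Z * (h.posSemidef.sqrt)⁻¹)ᵀ -
            (hA.posSemidef.sqrt)⁻¹ * Ct - Ct * (hA.posSemidef.sqrt)⁻¹ + α • Ct ^ 2))) :=
  inv_sqrt_update_error_bound_general α hα A Z hA hB h Ct hpos
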